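/- arXiv:2601.05797 — 2 statements merged into one kernel-verified Lean document; each statement's English description precedes it below -/
import Mathlib

section
/- Let S be a K-algebra with pseudo-degree function χ, a ∈ N(S) with χ(a) > 0, and suppose C_S(a) satisfies condition D(ℓ) for some ℓ > 0. If b ∈ C_S(a) ∩ N_l(S), then there exists a nonzero polynomial P(s,t) ∈ K[s,t] in two commuting variables such that P(a,b) = 0. -/
/-- A pseudo-degree function on a (not necessarily associative) algebra `S`. -/
def IsPseudoDegree {S : Type*} [NonAssocRing S] (χ : S → WithBot ℤ) : Prop :=
  (∀ a : S, χ a = ⊥ ↔ a = 0) ∧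
  (∀ a b : S, χ (a * b) = χ a + χ b) ∧
  (∀ a b : S, χ (a + b) ≤ max (χ a) (χ b))

/-- The nucleus of `S`. -/
def nucleus (S : Type*) [NonAssocRing S] : Set S :=
  {a | (∀ b c : S, a * (b * c) = (a * b) * c) ∧
       (∀ b c : S, (b * a) * c = b * (a * c)) ∧
       (∀ b c : S, (b * c) * a = b * (c * a))}

/-- The centralizer of `a` in `S`. -/
def centralizer {S : Type*} [NonAssocRing S] (a : S) : Set S :=
  {b | a * b = b * a}

/-- Condition `D(ℓ)` for a subset `B` of `S` with respect to a pseudo-degree function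
`χ`: every nonzero element of `B` has `χ`-value `≥ 0`, and whenever `ℓ + 1` elements
of `B` are all mapped to the same integer by `χ`, some nontrivial `K`-linear
combination of them has strictly smaller `χ`-value. -/
def CondD (K : Type*) {S : Type*} [Field K] [NonAssocRing S] [Module K S]
    (χ : S → WithBot ℤ) (B : Set S) (ℓ : ℕ) : Prop :=
  (∀ b ∈ B, b ≠ 0 → 0 ≤ χ b) ∧
  ∀ (f : Fin (ℓ + 1) → S) (n : ℤ), (∀ i, f i ∈ B) →
    (∀ i, χ (f i) = (n : WithBot ℤ)) →
    ∃ c : Fin (ℓ + 1) → K, (∃ i, c i ≠ 0) ∧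
      χ (∑ i, c i • f i) < (n : WithBot ℤ)

/-- Powers of an element of a non-associative unital ring. -/
def apow {S : Type*} [NonAssocRing S] (a : S) : ℕ → S
  | 0 => 1
  | n + 1 => a * apow a n

/-- Evaluation of a polynomial `p ∈ K[x]` at an element `a` of a non-associative
`K`-algebra; for `a` in the nucleus this is the usual evaluation in `K[a]`. -/
noncomputable def evalAt {K S : Type*} [Field K] [NonAssocRing S] [Module K S]
    (a : S) (p : Polynomial K) : S :=
  p.sum fun i c => c • apow a i

/-- The left nucleus of `S`. -/
def leftNucleus (S : Type*) [NonAssocRing S] : Set S :=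
  {a | ∀ b c : S, a * (b * c) = (a * b) * c}

/-- Evaluation of a polynomial in two commuting variables at a pair `(a, b)`;
well-defined (independent of parenthesization and order) when `a` is in the nucleus
and `b` commutes with `a`. -/
noncomputable def evalAt2 {K S : Type*} [Field K] [NonAssocRing S] [Module K S]
    (a b : S) (P : MvPolynomial (Fin 2) K) : S :=
  Finsupp.sum (AddMonoidAlgebra.coeff P) fun mon c => c • (apow a (mon 0) * apow b (mon 1))

/-!
Multiplicativity of `χ` together with `D(ℓ)` makes `χ` behave like a degree on `C_S(a)`: the
elements of `C_S(a)` of `χ`-value at most `m` form a subspace `Fₘ`, with `F₋₁ = 0`, and `D(ℓ)`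
bounds the dimension of `Fₘ / Fₘ₋₁` by `ℓ`. Hence `dim Fₙ ≤ ℓ (n + 1)`. The
monomials `aⁱ bʲ` with `i, j ≤ M` lie in `C_S(a)` and have `χ`-value at most `M (χ a + χ b)`,
so for large `M` these `(M + 1)²` monomials are linearly dependent, and a dependence relation
is the required polynomial.
-/

theorem Submodule.rank_le_rank_add_of_exists_sum_smul_mem {K V : Type*} [DivisionRing K]
    [AddCommGroup V] [Module K V] {N M : Submodule K V} (hNM : N ≤ M) (ℓ : ℕ)
    (h : ∀ x : Fin (ℓ + 1) → V, (∀ i, x i ∈ M) → (∀ i, x i ∉ N) →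
      ∃ c : Fin (ℓ + 1) → K, c ≠ 0 ∧ ∑ i, c i • x i ∈ N) :
    Module.rank K M ≤ Module.rank K N + ℓ := by
  let N' := N.comap M.subtype
  have hquot : Module.rank K (M ⧸ N') ≤ ℓ := by
    refine _root_.rank_le fun s hs => ?_
    by_contra! hlt
    let j : Fin (ℓ + 1) ↪ s := (Fin.castLEEmb hlt).trans s.equivFin.symm.toEmbedding
    have hli : LinearIndependent K fun i => (j i : M ⧸ N') := hs.comp j j.injective
    choose x hx using fun i => N'.mkQ_surjective (j i : M ⧸ N')
    have hxN : ∀ i, (x i : V) ∉ N := fun i hi =>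
      hli.ne_zero i (by rw [← hx i]; exact (Submodule.Quotient.mk_eq_zero N').mpr hi)
    obtain ⟨c, hc, hcN⟩ := h (fun i => x i) (fun i => (x i).2) hxN
    refine hc (funext <| Fintype.linearIndependent_iff.mp hli c ?_)
    have : ∑ i, c i • x i ∈ N' := by simpa [N'] using hcN
    calc ∑ i, c i • (j i : M ⧸ N') = N'.mkQ (∑ i, c i • x i) := by simp [hx]
      _ = 0 := (Submodule.Quotient.mk_eq_zero N').mpr this
  calc Module.rank K M = Module.rank K (M ⧸ N') + Module.rank K N' :=
        (rank_quotient_add_rank_of_divisionRing N').symm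
    _ = Module.rank K (M ⧸ N') + Module.rank K N := by
        rw [(Submodule.comapSubtypeEquivOfLe hNM).rank_eq]
    _ ≤ Module.rank K N + ℓ := by rw [add_comm]; gcongr

theorem LinearIndependent.card_le_rank_of_forall_mem {ι R V : Type*} [Fintype ι] [Ring R]
    [Nontrivial R] [AddCommGroup V] [Module R V] {v : ι → V} (hv : LinearIndependent R v)
    {F : Submodule R V} (hF : ∀ i, v i ∈ F) : (Fintype.card ι : Cardinal) ≤ Module.rank R F := by
  have hvF : LinearIndependent R fun i => (⟨v i, hF i⟩ : F) := .of_comp F.subtype hv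
  simpa using hvF.cardinal_lift_le_rank

theorem WithBot.lt_coe_iff_le_coe_sub_one {x : WithBot ℤ} {m : ℤ} :
    x < m ↔ x ≤ ((m - 1 : ℤ) : WithBot ℤ) := by
  cases x <;> simp

theorem WithBot.exists_le_natCast (x : WithBot ℤ) : ∃ C : ℕ, x ≤ ((C : ℤ) : WithBot ℤ) := by
  cases x with
  | bot => exact ⟨0, bot_le⟩
  | coe m => exact ⟨m.toNat, WithBot.coe_le_coe.2 (Int.self_le_toNat m)⟩

-- The span makes this a submodule outright; `mem_degreeLE_iff` identifies it with the sublevel set.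
def degreeLE (K : Type*) {S : Type*} [Field K] [NonAssocRing S] [Module K S]
    (χ : S → WithBot ℤ) (m : ℤ) : Submodule K S :=
  Submodule.span K {x | χ x ≤ m}

namespace IsPseudoDegree

variable {K S : Type*} [Field K] [NonAssocRing S] [Module K S] {χ : S → WithBot ℤ}

theorem map_zero (hχ : IsPseudoDegree χ) : χ 0 = ⊥ := (hχ.1 0).2 rfl

theorem map_one_le (hχ : IsPseudoDegree χ) : χ 1 ≤ 0 := by
  have h := hχ.2.1 1 1
  rw [one_mul] at h
  cases h1 : χ 1 with
  | bot => exact bot_le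
  | coe m =>
    rw [h1, ← WithBot.coe_add, WithBot.coe_inj] at h
    exact WithBot.coe_le_coe.mpr (by omega)

theorem map_smul_le [IsScalarTower K S S] (hχ : IsPseudoDegree χ)
    (hscalar : ∀ c : K, c • (1 : S) ≠ 0 → 0 ≤ χ (c • 1)) (c : K) (x : S) :
    χ (c • x) ≤ χ x := by
  by_cases hc : c = 0
  · simp [hc, hχ.map_zero]
  have hunit : (c • 1 : S) * (c⁻¹ • 1) = 1 := by
    rw [smul_mul_assoc, one_mul, smul_smul, mul_inv_cancel₀ hc, one_smul]
  have hle : χ (c • 1) ≤ 0 := by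
    by_cases h0 : c⁻¹ • (1 : S) = 0
    · rw [h0, mul_zero] at hunit
      rw [← hunit, smul_zero, hχ.map_zero]
      exact bot_le
    · refine le_of_add_le_of_nonneg_left ?_ (hscalar _ h0)
      rw [← hχ.2.1, hunit]
      exact hχ.map_one_le
  calc χ (c • x) = χ (c • 1) + χ x := by rw [← hχ.2.1, smul_mul_assoc, one_mul]
    _ ≤ 0 + χ x := by gcongr
    _ = χ x := zero_add _

theorem mem_degreeLE_iff (hχ : IsPseudoDegree χ) (hsmul : ∀ (c : K) x, χ (c • x) ≤ χ x)
    {m : ℤ} {x : S} : x ∈ degreeLE K χ m ↔ χ x ≤ m := by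
  refine ⟨fun hx => ?_, fun hx => Submodule.subset_span hx⟩
  induction hx using Submodule.span_induction with
  | mem y hy => exact hy
  | zero => simp [hχ.map_zero]
  | add y z _ _ hy hz => exact (hχ.2.2 y z).trans (max_le hy hz)
  | smul c y _ hy => exact (hsmul c y).trans hy

theorem map_apow_le (hχ : IsPseudoDegree χ) {x : S} {C : ℤ} (hx : χ x ≤ C) (n : ℕ) :
    χ (apow x n) ≤ ((n * C : ℤ) : WithBot ℤ) := by
  induction n with
  | zero => simpa [apow] using hχ.map_one_le
  | succ n ih =>
    calc χ (apow x (n + 1)) = χ x + χ (apow x n) := hχ.2.1 _ _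
      _ ≤ C + ((n * C : ℤ) : WithBot ℤ) := add_le_add hx ih
      _ = (((n + 1 : ℕ) * C : ℤ) : WithBot ℤ) := by
          rw [← WithBot.coe_add]; congr 1; push_cast; ring

theorem map_apow_mul_apow_le (hχ : IsPseudoDegree χ) {a b : S} {A B M i j : ℕ}
    (hA : χ a ≤ (A : ℤ)) (hB : χ b ≤ (B : ℤ)) (hi : i ≤ M) (hj : j ≤ M) :
    χ (apow a i * apow b j) ≤ ((M * (A + B) : ℕ) : ℤ) :=
  calc χ (apow a i * apow b j) = χ (apow a i) + χ (apow b j) := hχ.2.1 _ _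
    _ ≤ ((i * A : ℤ) : WithBot ℤ) + ((j * B : ℤ) : WithBot ℤ) :=
        add_le_add (hχ.map_apow_le hA i) (hχ.map_apow_le hB j)
    _ ≤ ((M * (A + B) : ℕ) : ℤ) := by
        rw [← WithBot.coe_add, WithBot.coe_le_coe]
        push_cast
        nlinarith [(Nat.cast_le (α := ℤ)).2 hi, (Nat.cast_le (α := ℤ)).2 hj]

end IsPseudoDegree

section Filtration

variable {K S : Type*} [Field K] [NonAssocRing S] [Module K S] [IsScalarTower K S S]
  {χ : S → WithBot ℤ} {V : Submodule K S} {ℓ : ℕ}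

theorem mem_inf_degreeLE_iff (hχ : IsPseudoDegree χ) (hV : (1 : S) ∈ V)
    (hD : CondD K χ V ℓ) {m : ℤ} {x : S} : x ∈ V ⊓ degreeLE K χ m ↔ x ∈ V ∧ χ x ≤ m :=
  and_congr_right' (hχ.mem_degreeLE_iff (hχ.map_smul_le fun c hc => hD.1 _ (V.smul_mem c hV) hc))

theorem rank_inf_degreeLE_le_add (hχ : IsPseudoDegree χ) (hV : (1 : S) ∈ V)
    (hD : CondD K χ V ℓ) (m : ℤ) :
    Module.rank K ↥(V ⊓ degreeLE K χ m) ≤ Module.rank K ↥(V ⊓ degreeLE K χ (m - 1)) + ℓ := by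
  have hmono : V ⊓ degreeLE K χ (m - 1) ≤ V ⊓ degreeLE K χ m := fun x hx => by
    rw [mem_inf_degreeLE_iff hχ hV hD] at hx ⊢
    exact ⟨hx.1, hx.2.trans (WithBot.coe_le_coe.2 (sub_one_lt m).le)⟩
  refine Submodule.rank_le_rank_add_of_exists_sum_smul_mem hmono ℓ fun x hxM hxN => ?_
  simp only [mem_inf_degreeLE_iff hχ hV hD, ← WithBot.lt_coe_iff_le_coe_sub_one] at hxM hxN ⊢
  have hdeg (i : Fin (ℓ + 1)) : χ (x i) = m :=
    le_antisymm (hxM i).2 (not_lt.1 fun h => hxN i ⟨(hxM i).1, h⟩)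
  obtain ⟨c, ⟨i, hi⟩, hlt⟩ := hD.2 x m (fun i => (hxM i).1) hdeg
  exact ⟨c, fun h => hi (congrFun h i),
    V.sum_mem fun i _ => V.smul_mem _ (hxM i).1, hlt⟩

theorem rank_inf_degreeLE_le (hχ : IsPseudoDegree χ) (hV : (1 : S) ∈ V)
    (hD : CondD K χ V ℓ) (n : ℕ) :
    Module.rank K ↥(V ⊓ degreeLE K χ n) ≤ ℓ * (n + 1) := by
  induction n with
  | zero =>
    have hbot : V ⊓ degreeLE K χ (-1) = ⊥ := by
      refine eq_bot_iff.2 fun x hx => by_contra fun hx0 => ?_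
      rw [mem_inf_degreeLE_iff hχ hV hD] at hx
      exact absurd (WithBot.coe_le_coe.1 ((hD.1 x hx.1 hx0).trans hx.2)) (by norm_num)
    have := rank_inf_degreeLE_le_add hχ hV hD 0
    rw [zero_sub, hbot] at this
    simpa using this
  | succ n ih =>
    calc Module.rank K ↥(V ⊓ degreeLE K χ (n + 1 : ℕ))
        ≤ Module.rank K ↥(V ⊓ degreeLE K χ n) + ℓ := by
          have := rank_inf_degreeLE_le_add hχ hV hD (n + 1 : ℕ)
          rwa [Nat.cast_succ, add_sub_cancel_right] at this
      _ ≤ ℓ * (n + 1) + ℓ := by gcongr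
      _ = ℓ * ((n + 1 : ℕ) + 1) := by push_cast; ring

theorem not_linearIndependent_apow_mul_apow (hχ : IsPseudoDegree χ) (hV : (1 : S) ∈ V)
    (hD : CondD K χ V ℓ) {a b : S} (hab : ∀ i j, apow a i * apow b j ∈ V) :
    ¬ LinearIndependent K fun m : Fin 2 →₀ ℕ => apow a (m 0) * apow b (m 1) := by
  intro hli
  obtain ⟨A, hA⟩ := WithBot.exists_le_natCast (χ a)
  obtain ⟨B, hB⟩ := WithBot.exists_le_natCast (χ b)
  -- large enough that `ℓ (n + 1) < (M + 1)²`
  set M := ℓ * (A + B + 1)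
  set n := M * (A + B)
  let e : Fin (M + 1) × Fin (M + 1) → Fin 2 →₀ ℕ :=
    fun p => Finsupp.single 0 (p.1 : ℕ) + Finsupp.single 1 (p.2 : ℕ)
  have he0 (p) : e p 0 = p.1 := by simp [e]
  have he1 (p) : e p 1 = p.2 := by simp [e]
  have he : Function.Injective e := fun p q hpq =>
    Prod.ext (Fin.ext (by rw [← he0, hpq, he0])) (Fin.ext (by rw [← he1, hpq, he1]))
  have hmem (p : Fin (M + 1) × Fin (M + 1)) :
      apow a (e p 0) * apow b (e p 1) ∈ V ⊓ degreeLE K χ n := by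
    rw [mem_inf_degreeLE_iff hχ hV hD, he0, he1]
    exact ⟨hab _ _, hχ.map_apow_mul_apow_le hA hB (Nat.lt_succ_iff.1 p.1.2)
      (Nat.lt_succ_iff.1 p.2.2)⟩
  have hcard := ((hli.comp e he).card_le_rank_of_forall_mem hmem).trans
    (rank_inf_degreeLE_le hχ hV hD n)
  simp only [Fintype.card_prod, Fintype.card_fin] at hcard
  have hcard' : (M + 1) * (M + 1) ≤ ℓ * (n + 1) := by exact_mod_cast hcard
  have hsq : M * M = ℓ * n + ℓ * M := by simp only [M, n]; ring
  have hℓM : ℓ ≤ M := Nat.le_mul_of_pos_right ℓ (by omega)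
  nlinarith

end Filtration

section Centralizer

variable {S : Type*} [NonAssocRing S] {a x y : S}

theorem one_mem_centralizer (a : S) : (1 : S) ∈ centralizer a :=
  (mul_one a).trans (one_mul a).symm

theorem mul_mem_centralizer (ha : a ∈ nucleus S) (hx : x ∈ centralizer a)
    (hy : y ∈ centralizer a) : x * y ∈ centralizer a := by
  change a * (x * y) = x * y * a
  rw [ha.1, show a * x = x * a from hx, ha.2.1, show a * y = y * a from hy, ← ha.2.2]

theorem apow_mem_centralizer (ha : a ∈ nucleus S) (hx : x ∈ centralizer a) (n : ℕ) :
    apow x n ∈ centralizer a := by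
  induction n with
  | zero => exact one_mem_centralizer a
  | succ n ih => exact mul_mem_centralizer ha hx ih

variable (K : Type*) [Field K] [Module K S] [SMulCommClass K S S] [IsScalarTower K S S]

def centralizerSubmodule (a : S) : Submodule K S where
  carrier := centralizer a
  add_mem' {x y} (hx : a * x = x * a) (hy : a * y = y * a) := by
    change a * (x + y) = (x + y) * a
    rw [mul_add, add_mul, hx, hy]
  zero_mem' := (mul_zero a).trans (zero_mul a).symm
  smul_mem' c x (hx : a * x = x * a) := by
    change a * (c • x) = (c • x) * a
    rw [mul_smul_comm, smul_mul_assoc, hx]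

end Centralizer

theorem evalAt2_eq_linearCombination {K S : Type*} [Field K] [NonAssocRing S] [Module K S]
    (a b : S) (P : MvPolynomial (Fin 2) K) :
    evalAt2 a b P = Finsupp.linearCombination K
      (fun m : Fin 2 →₀ ℕ => apow a (m 0) * apow b (m 1)) (AddMonoidAlgebra.coeff P) :=
  (Finsupp.linearCombination_apply _ _).symm

theorem exists_ne_zero_evalAt2_eq_zero {K S : Type*} [Field K] [NonAssocRing S] [Module K S]
    {a b : S} (h : ¬ LinearIndependent K fun m : Fin 2 →₀ ℕ => apow a (m 0) * apow b (m 1)) :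
    ∃ P : MvPolynomial (Fin 2) K, P ≠ 0 ∧ evalAt2 a b P = 0 := by
  simp only [linearIndependent_iff, not_forall, exists_prop] at h
  obtain ⟨l, hl, hl0⟩ := h
  refine ⟨AddMonoidAlgebra.ofCoeff l, fun hP => hl0 ?_, ?_⟩
  · simpa using congrArg AddMonoidAlgebra.coeff hP
  · rwa [evalAt2_eq_linearCombination]

theorem algebraically_dependent_of_commute_general {K S : Type*} [Field K] [NonAssocRing S]
    [Module K S] [SMulCommClass K S S] [IsScalarTower K S S]
    (χ : S → WithBot ℤ) (hχ : IsPseudoDegree χ)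
    (a : S) (ha : a ∈ nucleus S)
    (ℓ : ℕ) (hD : CondD K χ (centralizer a) ℓ)
    (b : S) (hb : b ∈ centralizer a ∩ leftNucleus S) :
    ∃ P : MvPolynomial (Fin 2) K, P ≠ 0 ∧ evalAt2 a b P = 0 := by
  have hmem (i j : ℕ) : apow a i * apow b j ∈ centralizerSubmodule K a :=
    mul_mem_centralizer ha (apow_mem_centralizer ha rfl i) (apow_mem_centralizer ha hb.1 j)
  exact exists_ne_zero_evalAt2_eq_zero
    (not_linearIndependent_apow_mul_apow hχ (one_mem_centralizer a) hD hmem)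

/-- Let `S` be a `K`-algebra with pseudo-degree function `χ`, `a` in the nucleus with
`χ a > 0`, and suppose the centralizer `C_S(a)` satisfies condition `D(ℓ)` for some
`ℓ > 0`.  If `b` centralizes `a` and lies in the left nucleus, then `a` and `b` are
algebraically dependent over `K`: there is a nonzero polynomial `P ∈ K[s,t]` in two
commuting variables with `P(a, b) = 0`. -/
theorem algebraically_dependent_of_commute {K S : Type*} [Field K] [NonAssocRing S]
    [Module K S] [SMulCommClass K S S] [IsScalarTower K S S]
    (χ : S → WithBot ℤ) (hχ : IsPseudoDegree χ)
    (a : S) (ha : a ∈ nucleus S) (hpos : 0 < χ a)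
    (ℓ : ℕ) (hℓ : 0 < ℓ) (hD : CondD K χ (centralizer a) ℓ)
    (b : S) (hb : b ∈ centralizer a ∩ leftNucleus S) :
    ∃ P : MvPolynomial (Fin 2) K, P ≠ 0 ∧ evalAt2 a b P = 0 :=
  algebraically_dependent_of_commute_general χ hχ a ha ℓ hD b hb
end

section
/- The degree function with respect to x on the non-associative Ore extension S = 𝕆[y][x; σ, δ] (where σ is an ℝ-algebra endomorphism of 𝕆[y] with deg_y(σ(y)) = s > 1 and δ a σ-derivation) is a pseudo-degree function: deg(a) = -∞ iff a = 0, deg(ab) = deg(a) + deg(b), and deg(a+b) ≤ max(deg(a), deg(b)). -/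
/-- The octonions, realized via the Cayley–Dickson doubling of the real quaternions. -/
def Octonion : Type := Quaternion ℝ × Quaternion ℝ

noncomputable instance : AddCommGroup Octonion :=
  inferInstanceAs (AddCommGroup (Quaternion ℝ × Quaternion ℝ))

noncomputable instance : Module ℝ Octonion :=
  inferInstanceAs (Module ℝ (Quaternion ℝ × Quaternion ℝ))

/-- Cayley–Dickson multiplication on pairs of quaternions. -/
noncomputable def Octonion.omul (a b : Quaternion ℝ × Quaternion ℝ) :
    Quaternion ℝ × Quaternion ℝ :=
  (a.1 * b.1 - star b.2 * a.2, b.2 * a.1 + a.2 * star b.1)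

noncomputable instance : One Octonion := ⟨((1 : Quaternion ℝ), (0 : Quaternion ℝ))⟩

theorem Octonion.omul_add (a b c : Quaternion ℝ × Quaternion ℝ) :
    Octonion.omul a (b + c) = Octonion.omul a b + Octonion.omul a c := by
  unfold Octonion.omul
  refine Prod.ext ?_ ?_ <;>
    simp only [Prod.fst_add, Prod.snd_add, mul_add, add_mul, star_add] <;> abel

theorem Octonion.add_omul (a b c : Quaternion ℝ × Quaternion ℝ) :
    Octonion.omul (a + b) c = Octonion.omul a c + Octonion.omul b c := by
  unfold Octonion.omul
  refine Prod.ext ?_ ?_ <;>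
    simp only [Prod.fst_add, Prod.snd_add, mul_add, add_mul, star_add] <;> abel

theorem Octonion.zero_omul (a : Quaternion ℝ × Quaternion ℝ) :
    Octonion.omul 0 a = 0 := by
  unfold Octonion.omul; refine Prod.ext ?_ ?_ <;> simp

theorem Octonion.omul_zero (a : Quaternion ℝ × Quaternion ℝ) :
    Octonion.omul a 0 = 0 := by
  unfold Octonion.omul; refine Prod.ext ?_ ?_ <;> simp

noncomputable instance : NonUnitalNonAssocRing Octonion :=
  { (inferInstanceAs (AddCommGroup Octonion) : AddCommGroup Octonion) with
    mul := Octonion.omul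
    left_distrib := fun a b c => Octonion.omul_add a b c
    right_distrib := fun a b c => Octonion.add_omul a b c
    zero_mul := fun a => Octonion.zero_omul a
    mul_zero := fun a => Octonion.omul_zero a }

/-- `R = 𝕆[y]`, the polynomial ring over the octonions, as finitely supported
sequences of octonion coefficients. -/
noncomputable abbrev OctPoly : Type := ℕ →₀ Octonion

/-- The convolution product on `𝕆[y]`. -/
noncomputable instance : Mul OctPoly :=
  ⟨fun p q => p.sum fun i a => q.sum fun j b => Finsupp.single (i + j) (a * b)⟩

theorem OctPoly.mul_zero (a : OctPoly) : a * (0 : OctPoly) = 0 := by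
  show (Finsupp.sum a fun i c => Finsupp.sum 0 fun j b => Finsupp.single (i + j) (c * b)) = 0
  simp

/-- The variable `y` of `𝕆[y]`. -/
noncomputable def Yv : OctPoly := Finsupp.single 1 (1 : Octonion)

/-- The constant polynomial `1` of `𝕆[y]`. -/
noncomputable def oneR : OctPoly := Finsupp.single 0 (1 : Octonion)

/-- The `y`-degree of a polynomial in `𝕆[y]` (with junk value `0` at `0`). -/
def degy (r : OctPoly) : ℕ := WithBot.unbotD 0 (r.support.max)

/-- The underlying additive group of the Ore extension `S = R[x; σ, δ]`:
finitely supported sequences of coefficients in `R = 𝕆[y]`. -/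
noncomputable abbrev OrePoly : Type := ℕ →₀ OctPoly

/-- Left multiplication by `x` in `R[x; σ, δ]`, determined by
`x·(r xʲ) = σ(r) x^(j+1) + δ(r) xʲ`. -/
noncomputable def xmul (σ δ : OctPoly →+ OctPoly) : OrePoly →+ OrePoly :=
  Finsupp.liftAddHom fun j =>
    (Finsupp.singleAddHom (j + 1)).comp σ + (Finsupp.singleAddHom j).comp δ

/-- The multiplication of the non-associative Ore extension `R[x; σ, δ]`:
`(Σᵢ aᵢ xⁱ)·q = Σᵢ aᵢ·(xⁱ·q)`, where `xⁱ` acts via iterated `xmul` and `aᵢ`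
multiplies every coefficient from the left. -/
noncomputable def oreMul (σ δ : OctPoly →+ OctPoly) (p q : OrePoly) : OrePoly :=
  p.sum fun i a => Finsupp.mapRange (a * ·) (OctPoly.mul_zero a) ((xmul σ δ)^[i] q)

/-- The constant `1 = 1·x⁰` of the Ore extension. -/
noncomputable def oneS : OrePoly := Finsupp.single 0 oneR

/-- The `x`-degree of an element of the Ore extension, valued in `ℤ ∪ {-∞}`. -/
def xdeg (p : OrePoly) : WithBot ℤ := (p.support.max).map (Nat.cast : ℕ → ℤ)

/-- `σ` is a unital `ℝ`-algebra endomorphism of `𝕆[y]`. -/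
def IsAlgEndo (σ : OctPoly →+ OctPoly) : Prop :=
  (∀ p q : OctPoly, σ (p * q) = σ p * σ q) ∧ σ oneR = oneR ∧
    (∀ (r : ℝ) (p : OctPoly), σ (r • p) = r • σ p)

/-- `δ` is a `σ`-derivation of `𝕆[y]`. -/
def IsSigmaDerivation (σ δ : OctPoly →+ OctPoly) : Prop :=
  (∀ p q : OctPoly, δ (p * q) = σ p * δ q + δ p * q) ∧
    (∀ (r : ℝ) (p : OctPoly), δ (r • p) = r • δ p)

/-- An element of `𝕆` is real if it is a real multiple of `1`. -/
def Octonion.IsReal (c : Octonion) : Prop := ∃ r : ℝ, c = r • (1 : Octonion)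

/-- Membership in the nucleus of the Ore extension `R[x; σ, δ]`. -/
def OreNucleus (σ δ : OctPoly →+ OctPoly) (a : OrePoly) : Prop :=
  (∀ b c : OrePoly, oreMul σ δ a (oreMul σ δ b c) = oreMul σ δ (oreMul σ δ a b) c) ∧
  (∀ b c : OrePoly, oreMul σ δ (oreMul σ δ b a) c = oreMul σ δ b (oreMul σ δ a c)) ∧
  (∀ b c : OrePoly, oreMul σ δ (oreMul σ δ b c) a = oreMul σ δ b (oreMul σ δ c a))

/-!
The leading coefficient of `a·b` is `lc(a)·σ^(deg a)(lc(b))`: the power `xⁱ` carries the top term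
`b_d x^d` of `b` to `σⁱ(b_d) x^(d+i)`, and `δ` only contributes in lower degrees. It is nonzero
because `𝕆[y]` has no zero divisors (the octonion norm is multiplicative) and `σ` is injective.
For the injectivity, `c·c̄ = |c|²` is a nonzero constant, so `σ` maps nonzero constants to nonzero
constants; hence `σ(c yⁿ) = σ(c)·σ(y)ⁿ` has exact degree `n s`, and since `s > 0` the top monomial of
`r` survives in `σ r`.
-/

open Finsupp

namespace Octonion

noncomputable def normSq (c : Octonion) : ℝ := Quaternion.normSq c.1 + Quaternion.normSq c.2

noncomputable def conj (c : Octonion) : Octonion := (star c.1, -c.2)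

theorem mul_def (a b : Octonion) : a * b = omul a b := rfl

theorem normSq_mul (a b : Octonion) : normSq (a * b) = normSq a * normSq b := by
  simp only [normSq, mul_def, omul, Quaternion.normSq_def', Quaternion.re_mul, Quaternion.imI_mul,
    Quaternion.imJ_mul, Quaternion.imK_mul, Quaternion.re_sub, Quaternion.imI_sub,
    Quaternion.imJ_sub, Quaternion.imK_sub, Quaternion.re_add, Quaternion.imI_add,
    Quaternion.imJ_add, Quaternion.imK_add, Quaternion.re_star, Quaternion.imI_star,
    Quaternion.imJ_star, Quaternion.imK_star]
  ring

theorem normSq_eq_zero {c : Octonion} : normSq c = 0 ↔ c = 0 := by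
  rw [normSq, add_eq_zero_iff_of_nonneg Quaternion.normSq_nonneg Quaternion.normSq_nonneg,
    Quaternion.normSq_eq_zero, Quaternion.normSq_eq_zero]
  exact ⟨fun h => Prod.ext h.1 h.2, fun h => h ▸ ⟨rfl, rfl⟩⟩

instance : NoZeroDivisors Octonion where
  eq_zero_or_eq_zero_of_mul_eq_zero {a b} h := by
    have := congrArg normSq h
    rwa [normSq_mul, normSq_eq_zero.2 rfl, mul_eq_zero, normSq_eq_zero, normSq_eq_zero] at this

instance : NeZero (1 : Octonion) := ⟨fun h => one_ne_zero (congrArg Prod.fst h)⟩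

theorem mul_one (a : Octonion) : a * 1 = a := by
  show omul a (1, 0) = a
  refine Prod.ext ?_ ?_ <;> simp [omul]

theorem mul_conj (c : Octonion) : c * conj c = normSq c • 1 := by
  show omul c (star c.1, -c.2) = ((Quaternion.normSq c.1 + Quaternion.normSq c.2) • 1, _ • 0)
  refine Prod.ext ?_ ?_
  · simp only [omul, star_neg, neg_mul, sub_neg_eq_add, Quaternion.self_mul_star,
      Quaternion.star_mul_self, ← Quaternion.coe_add]
    ext <;> simp [Quaternion.re_one, Quaternion.imI_one, Quaternion.imJ_one, Quaternion.imK_one]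
  · simp [omul]

end Octonion

namespace Finsupp

variable {M : Type*} [Zero M] {p : ℕ →₀ M} {d : ℕ}

theorem support_max_eq_coe_iff : p.support.max = d ↔ p d ≠ 0 ∧ ∀ m, d < m → p m = 0 := by
  constructor
  · intro h
    refine ⟨mem_support_iff.1 (Finset.mem_of_max h), fun m hm => ?_⟩
    by_contra hm0
    exact absurd (Finset.le_max_of_eq (mem_support_iff.2 hm0) h) (not_le.2 hm)
  · rintro ⟨hd, hvan⟩
    refine le_antisymm (Finset.max_le fun m hm => ?_) (Finset.le_max (mem_support_iff.2 hd))
    exact WithBot.coe_le_coe.2 (not_lt.1 fun h => mem_support_iff.1 hm (hvan m h))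

theorem exists_support_max_eq (hp : p ≠ 0) : ∃ d : ℕ, p.support.max = d :=
  Finset.max_of_nonempty (support_nonempty_iff.2 hp)

theorem le_of_forall_lt_apply_eq_zero (hp : ∀ m, d < m → p m = 0) {i : ℕ} (hi : i ∈ p.support) :
    i ≤ d :=
  not_lt.1 fun h => mem_support_iff.1 hi (hp i h)

end Finsupp

namespace OctPoly

theorem mul_apply (p q : OctPoly) (n : ℕ) :
    (p * q) n = ∑ i ∈ p.support, ∑ j ∈ q.support, if i + j = n then p i * q j else 0 := by
  show (p.sum fun i a => q.sum fun j b => single (i + j) (a * b)) n = _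
  simp only [Finsupp.sum, finsetSum_apply, single_apply]

theorem zero_mul (q : OctPoly) : 0 * q = 0 :=
  sum_zero_index

theorem single_mul_single (i j : ℕ) (a b : Octonion) :
    (single i a : OctPoly) * single j b = single (i + j) (a * b) := by
  show ((single i a).sum fun i a => (single j b).sum fun j b => single (i + j) (a * b)) = _
  rw [sum_single_index, sum_single_index] <;> simp

variable {p q : OctPoly} {dp dq : ℕ}

theorem mul_apply_of_lt (hp : ∀ m, dp < m → p m = 0) (hq : ∀ m, dq < m → q m = 0) {n : ℕ}
    (hn : dp + dq < n) : (p * q) n = 0 := by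
  rw [mul_apply]
  refine Finset.sum_eq_zero fun i hi => Finset.sum_eq_zero fun j hj => if_neg ?_
  have := le_of_forall_lt_apply_eq_zero hp hi
  have := le_of_forall_lt_apply_eq_zero hq hj
  omega

theorem mul_apply_add (hp : ∀ m, dp < m → p m = 0) (hq : ∀ m, dq < m → q m = 0) :
    (p * q) (dp + dq) = p dp * q dq := by
  rw [mul_apply, Finset.sum_eq_single dp, Finset.sum_eq_single dq, if_pos rfl]
  · intro j hj hne
    have := le_of_forall_lt_apply_eq_zero hq hj
    exact if_neg (by omega)
  · intro h
    simp [notMem_support_iff.1 h]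
  · intro i hi hne
    refine Finset.sum_eq_zero fun j hj => if_neg ?_
    have := le_of_forall_lt_apply_eq_zero hp hi
    have := le_of_forall_lt_apply_eq_zero hq hj
    omega
  · intro h
    simp [notMem_support_iff.1 h]

theorem support_max_mul (hp : p.support.max = dp) (hq : q.support.max = dq) :
    (p * q).support.max = ↑(dp + dq) := by
  rw [support_max_eq_coe_iff] at hp hq ⊢
  exact ⟨mul_apply_add hp.2 hq.2 ▸ mul_ne_zero hp.1 hq.1, fun _ => mul_apply_of_lt hp.2 hq.2⟩

instance : NoZeroDivisors OctPoly where
  eq_zero_or_eq_zero_of_mul_eq_zero {p q} h := by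
    by_contra! hpq
    obtain ⟨dp, hdp⟩ := exists_support_max_eq hpq.1
    obtain ⟨dq, hdq⟩ := exists_support_max_eq hpq.2
    have hmul := support_max_mul hdp hdq
    rw [h, support_zero, Finset.max_empty] at hmul
    exact WithBot.bot_ne_coe hmul

end OctPoly

namespace IsAlgEndo

variable {σ : OctPoly →+ OctPoly} (hσ : IsAlgEndo σ)
include hσ

theorem map_mul (p q : OctPoly) : σ (p * q) = σ p * σ q :=
  hσ.1 p q

theorem map_single_zero_one : σ (single 0 1) = single 0 1 :=
  hσ.2.1

theorem map_smul (r : ℝ) (p : OctPoly) : σ (r • p) = r • σ p :=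
  hσ.2.2 r p

theorem support_max_map_single_zero {c : Octonion} (hc : c ≠ 0) :
    (σ (single 0 c)).support.max = (0 : ℕ) := by
  have hne : single 0 (c.normSq • (1 : Octonion)) ≠ 0 :=
    single_ne_zero.2 (smul_ne_zero (mt Octonion.normSq_eq_zero.1 hc) one_ne_zero)
  have hprod : σ (single 0 c) * σ (single 0 c.conj) = single 0 (c.normSq • 1) := by
    rw [← hσ.map_mul, OctPoly.single_mul_single, Octonion.mul_conj, zero_add, ← smul_single,
      hσ.map_smul, hσ.map_single_zero_one]
  have h₁ : σ (single 0 c) ≠ 0 := fun h => hne (by rw [← hprod, h, OctPoly.zero_mul])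
  have h₂ : σ (single 0 c.conj) ≠ 0 := fun h => hne (by rw [← hprod, h, OctPoly.mul_zero])
  obtain ⟨d₁, hd₁⟩ := exists_support_max_eq h₁
  obtain ⟨d₂, hd₂⟩ := exists_support_max_eq h₂
  have hsum := OctPoly.support_max_mul hd₁ hd₂
  rw [hprod, support_single _ (single_ne_zero.1 hne), Finset.max_singleton] at hsum
  have : 0 = d₁ + d₂ := WithBot.coe_injective hsum
  rw [hd₁, show d₁ = 0 by omega]

variable {s : ℕ} (hs : (σ Yv).support.max = s)
include hs

theorem support_max_map_single_one (n : ℕ) : (σ (single n 1)).support.max = ↑(n * s) := by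
  induction n with
  | zero =>
    rw [hσ.map_single_zero_one, support_single _ one_ne_zero, Finset.max_singleton, zero_mul]
    rfl
  | succ n ih =>
    have hy : (single (n + 1) 1 : OctPoly) = single n 1 * Yv := by
      rw [Yv, OctPoly.single_mul_single, Octonion.mul_one]
    rw [hy, hσ.map_mul, OctPoly.support_max_mul ih hs, add_mul, one_mul]

theorem support_max_map_single (n : ℕ) {c : Octonion} (hc : c ≠ 0) :
    (σ (single n c)).support.max = ↑(n * s) := by
  have hc1 : (single n c : OctPoly) = single 0 c * single n 1 := by
    rw [OctPoly.single_mul_single, zero_add, Octonion.mul_one]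
  rw [hc1, hσ.map_mul, OctPoly.support_max_mul (hσ.support_max_map_single_zero hc)
    (hσ.support_max_map_single_one hs n), zero_add]

theorem injective (hs0 : 0 < s) : Function.Injective σ := by
  refine (injective_iff_map_eq_zero σ).2 fun r hr => ?_
  by_contra hr0
  obtain ⟨d, hd⟩ := exists_support_max_eq hr0
  obtain ⟨hd0, hdlt⟩ := support_max_eq_coe_iff.1 hd
  have hlead : σ r (d * s) = σ (single d (r d)) (d * s) := by
    conv_lhs => rw [← sum_single r, Finsupp.sum, map_sum, finsetSum_apply]
    refine Finset.sum_eq_single d (fun i hi hid => ?_) (fun h => absurd (mem_support_iff.2 hd0) h)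
    have hlt : i * s < d * s :=
      Nat.mul_lt_mul_of_pos_right ((le_of_forall_lt_apply_eq_zero hdlt hi).lt_of_ne hid) hs0
    exact (support_max_eq_coe_iff.1 (hσ.support_max_map_single hs i (mem_support_iff.1 hi))).2 _ hlt
  refine (support_max_eq_coe_iff.1 (hσ.support_max_map_single hs d hd0)).1 ?_
  rw [← hlead, hr, Finsupp.zero_apply]

end IsAlgEndo

section OreExtension

variable (σ δ : OctPoly →+ OctPoly)

theorem xmul_apply_succ (p : OrePoly) (n : ℕ) :
    xmul σ δ p (n + 1) = σ (p n) + δ (p (n + 1)) := by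
  induction p using Finsupp.induction_linear with
  | zero => simp
  | add p q hp hq => simp only [map_add, Finsupp.add_apply, hp, hq]; abel
  | single j r =>
    simp only [xmul, liftAddHom_apply_single, AddMonoidHom.add_apply, AddMonoidHom.comp_apply,
      singleAddHom_apply, Finsupp.add_apply, single_apply]
    split_ifs <;> simp_all

variable {σ δ} {p q : OrePoly} {dp dq : ℕ}

theorem iterate_xmul_apply_of_lt (hq : ∀ m, dq < m → q m = 0) (k : ℕ) {m : ℕ}
    (hm : dq + k < m) : (xmul σ δ)^[k] q m = 0 := by
  induction k generalizing m with
  | zero => exact hq m hm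
  | succ k ih =>
    obtain ⟨m, rfl⟩ : ∃ m', m = m' + 1 := ⟨m - 1, by omega⟩
    rw [Function.iterate_succ_apply', xmul_apply_succ, ih (by omega), ih (by omega), map_zero,
      map_zero, add_zero]

theorem iterate_xmul_apply_add (hq : ∀ m, dq < m → q m = 0) (k : ℕ) :
    (xmul σ δ)^[k] q (dq + k) = σ^[k] (q dq) := by
  induction k with
  | zero => rfl
  | succ k ih =>
    rw [Function.iterate_succ_apply', ← add_assoc, xmul_apply_succ, ih,
      iterate_xmul_apply_of_lt hq k (by omega), map_zero, add_zero, Function.iterate_succ_apply']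

variable (σ δ) in
theorem oreMul_apply (p q : OrePoly) (n : ℕ) :
    oreMul σ δ p q n = ∑ i ∈ p.support, p i * (xmul σ δ)^[i] q n := by
  simp only [oreMul, Finsupp.sum, finsetSum_apply, mapRange_apply]

theorem oreMul_apply_of_lt (hp : ∀ m, dp < m → p m = 0) (hq : ∀ m, dq < m → q m = 0) {n : ℕ}
    (hn : dp + dq < n) : oreMul σ δ p q n = 0 := by
  rw [oreMul_apply]
  refine Finset.sum_eq_zero fun i hi => ?_
  have := le_of_forall_lt_apply_eq_zero hp hi
  rw [iterate_xmul_apply_of_lt hq i (by omega), OctPoly.mul_zero]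

theorem oreMul_apply_add (hp : ∀ m, dp < m → p m = 0) (hq : ∀ m, dq < m → q m = 0) :
    oreMul σ δ p q (dp + dq) = p dp * σ^[dp] (q dq) := by
  rw [oreMul_apply, Finset.sum_eq_single dp, add_comm, iterate_xmul_apply_add hq]
  · intro i hi hne
    have := (le_of_forall_lt_apply_eq_zero hp hi).lt_of_ne hne
    rw [iterate_xmul_apply_of_lt hq i (by omega), OctPoly.mul_zero]
  · intro h
    rw [notMem_support_iff.1 h, OctPoly.zero_mul]

theorem support_max_oreMul (hσ : Function.Injective σ) (hp : p.support.max = dp)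
    (hq : q.support.max = dq) : (oreMul σ δ p q).support.max = ↑(dp + dq) := by
  rw [support_max_eq_coe_iff] at hp hq ⊢
  have hlead : σ^[dp] (q dq) ≠ 0 := (hσ.iterate dp).ne_iff' (iterate_map_zero σ dp) |>.2 hq.1
  exact ⟨oreMul_apply_add hp.2 hq.2 ▸ mul_ne_zero hp.1 hlead,
    fun _ => oreMul_apply_of_lt hp.2 hq.2⟩

theorem xdeg_eq_bot_iff {a : OrePoly} : xdeg a = ⊥ ↔ a = 0 := by
  simp [xdeg, Finset.max_eq_bot]

theorem xdeg_add_le (a b : OrePoly) : xdeg (a + b) ≤ max (xdeg a) (xdeg b) := by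
  have hmono : Monotone (WithBot.map (Nat.cast : ℕ → ℤ)) := Nat.mono_cast.withBot_map
  calc xdeg (a + b) ≤ (a.support ∪ b.support).max.map Nat.cast :=
        hmono (Finset.max_mono support_add)
    _ = max (xdeg a) (xdeg b) := by rw [Finset.max_union]; exact hmono.map_max

theorem xdeg_oreMul (hσ : Function.Injective σ) (a b : OrePoly) : xdeg (oreMul σ δ a b) = xdeg a + xdeg b := by
  rcases eq_or_ne a 0 with rfl | ha
  · simp [oreMul, xdeg]
  rcases eq_or_ne b 0 with rfl | hb
  · simp [oreMul, xdeg, iterate_map_zero]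
  obtain ⟨da, hda⟩ := exists_support_max_eq ha
  obtain ⟨db, hdb⟩ := exists_support_max_eq hb
  simp only [xdeg, support_max_oreMul hσ hda hdb, hda, hdb]
  push_cast
  rfl

end OreExtension

theorem xdeg_isPseudoDegree_general (σ δ : OctPoly →+ OctPoly)
    (hσ : IsAlgEndo σ) (s : ℕ) (hs : (σ Yv).support.max = (s : WithBot ℕ)) (hs1 : 1 < s) :
    (∀ a : OrePoly, xdeg a = ⊥ ↔ a = 0) ∧
    (∀ a b : OrePoly, xdeg (oreMul σ δ a b) = xdeg a + xdeg b) ∧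
    (∀ a b : OrePoly, xdeg (a + b) ≤ max (xdeg a) (xdeg b)) :=
  have hinj : Function.Injective σ := hσ.injective hs (by omega)
  ⟨fun _ => xdeg_eq_bot_iff, xdeg_oreMul hinj, xdeg_add_le⟩

/-- The degree function with respect to `x` on the non-associative Ore extension
`S = 𝕆[y][x; σ, δ]` (with `σ` an `ℝ`-algebra endomorphism of `𝕆[y]` satisfying
`deg_y (σ y) = s > 1` and `δ` a `σ`-derivation) is a pseudo-degree function:
`deg a = -∞` iff `a = 0`, `deg (a·b) = deg a + deg b`, and
`deg (a + b) ≤ max (deg a) (deg b)`. -/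
theorem xdeg_isPseudoDegree (σ δ : OctPoly →+ OctPoly)
    (hσ : IsAlgEndo σ) (s : ℕ) (hs : (σ Yv).support.max = (s : WithBot ℕ)) (hs1 : 1 < s)
    (hδ : IsSigmaDerivation σ δ) :
    (∀ a : OrePoly, xdeg a = ⊥ ↔ a = 0) ∧
    (∀ a b : OrePoly, xdeg (oreMul σ δ a b) = xdeg a + xdeg b) ∧
    (∀ a b : OrePoly, xdeg (a + b) ≤ max (xdeg a) (xdeg b)) :=
  xdeg_isPseudoDegree_general σ δ hσ s hs hs1
end
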